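/- Typability from 4D' to 4D (adding trails for shift0/reset0): if Γ ⊢_4D' e : τ ⟨σ_α⟩ α ⟨σ_β⟩ β, then Γ⁺ ⊢_4D e : τ⁺ ⟨•_μ, σ_α⁺⟩ α⁺ ⟨•_μ, σ_β⁺⟩ β⁺, where ⁺ inserts the empty trail type •_μ at every position requiring a trail type. -/
import Mathlib


namespace P2FourD

/- 4D' types: trail-free 4D types for shift0/reset0, with defunctionalized
   meta-continuation types σ ::= •σ | (τ1 ⟨σ1⟩ τ2) :: σ. -/
mutual
inductive PTy : Type
  | nat : PTy
  | arr : PTy → PTy → PM → PTy → PM → PTy → PTy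
inductive PM : Type
  | empty : PM
  | cons : PTy → PM → PTy → PM → PM
end

/- Source language: λ-calculus with numbers and shift0/reset0. -/
inductive Tm : Type
  | var : ℕ → Tm
  | num : ℕ → Tm
  | lam : Tm → Tm
  | app : Tm → Tm → Tm
  | shift0 : Tm → Tm
  | reset0 : Tm → Tm

/-- The trail-free id-cont-type constraint of 4D'. -/
inductive IdContP : PTy → PM → PTy → Prop
  | idEmpty (γ : PTy) : IdContP γ .empty γ
  | idMeta (γ : PTy) (σ0 : PM) (γ' : PTy) : IdContP γ (.cons γ σ0 γ' σ0) γ'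

/-- The 4D' type system: Γ ⊢ e : τ ⟨σα⟩ α ⟨σβ⟩ β. -/
inductive PHasTy : List PTy → Tm → PTy → PM → PTy → PM → PTy → Prop
  | var {Γ : List PTy} {x : ℕ} {τ : PTy} {σ : PM} {α : PTy} :
      Γ[x]? = some τ → PHasTy Γ (.var x) τ σ α σ α
  | num {Γ : List PTy} {n : ℕ} {σ : PM} {α : PTy} : PHasTy Γ (.num n) .nat σ α σ α
  | lam {Γ : List PTy} {e : Tm} {τ1 τ2 : PTy} {σα : PM} {a : PTy} {σβ : PM} {b : PTy}
      {σ : PM} {γ : PTy} :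
      PHasTy (τ1 :: Γ) e τ2 σα a σβ b →
      PHasTy Γ (.lam e) (.arr τ1 τ2 σα a σβ b) σ γ σ γ
  | app {Γ : List PTy} {e1 e2 : Tm} {τ1 τ2 : PTy} {σα : PM} {a : PTy} {σβ : PM} {b : PTy}
      {σγ : PM} {γ : PTy} {σδ : PM} {δ : PTy} :
      PHasTy Γ e1 (.arr τ1 τ2 σα a σβ b) σγ γ σδ δ →
      PHasTy Γ e2 τ1 σβ b σγ γ →
      PHasTy Γ (.app e1 e2) τ2 σα a σδ δ
  | shift0 {Γ : List PTy} {e : Tm} {τ τ1 : PTy} {σ1 : PM} {τ2 : PTy} {σ' : PM} {α τ0 : PTy}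
      {σ0 : PM} {τ0' : PTy} {σ0' : PM} {β : PTy} :
      PHasTy ((.arr τ τ1 σ1 τ2 σ' α) :: Γ) e τ0 σ0 τ0' σ0' β →
      PHasTy Γ (.shift0 e) τ (.cons τ1 σ1 τ2 σ') α (.cons τ0 σ0 τ0' σ0') β
  | reset0 {Γ : List PTy} {e : Tm} {γ : PTy} {σid : PM} {γ' τ : PTy} {σα : PM} {α : PTy}
      {σβ : PM} {β : PTy} :
      IdContP γ σid γ' →
      PHasTy Γ e γ σid γ' (.cons τ σα α σβ) β →
      PHasTy Γ (.reset0 e) τ σα α σβ β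

/- The full 4D types with trails, and the 4D type system restricted to the
   shift0/reset0 fragment. -/
mutual
inductive Ty : Type
  | nat : Ty
  | arrow : Ty → Ty → Tr → Mc → Ty → Tr → Mc → Ty → Ty
inductive Tr : Type
  | empty : Tr
  | tr : Ty → Tr → Mc → Ty → Tr
inductive Mc : Type
  | empty : Mc
  | cons : Ty → Tr → Mc → Ty → Tr → Mc → Mc
end

inductive IdContType : Ty → Tr → Mc → Ty → Prop
  | idEmpty (γ : Ty) : IdContType γ .empty .empty γ
  | idTrail (γ : Ty) (σ : Mc) (γ' : Ty) : IdContType γ (.tr γ .empty σ γ') σ γ'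
  | idMeta (γ : Ty) (μ0 : Tr) (σ0 : Mc) (γ' : Ty) :
      IdContType γ .empty (.cons γ μ0 σ0 γ' μ0 σ0) γ'

/-- The 4D type system (shift0/reset0 fragment):
    Γ ⊢ e : τ ⟨μα, σα⟩ α ⟨μβ, σβ⟩ β. -/
inductive HasTy : List Ty → Tm → Ty → Tr → Mc → Ty → Tr → Mc → Ty → Prop
  | var {Γ : List Ty} {x : ℕ} {τ : Ty} {μ : Tr} {σ : Mc} {α : Ty} :
      Γ[x]? = some τ → HasTy Γ (.var x) τ μ σ α μ σ α
  | num {Γ : List Ty} {n : ℕ} {μ : Tr} {σ : Mc} {α : Ty} :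
      HasTy Γ (.num n) .nat μ σ α μ σ α
  | lam {Γ : List Ty} {e : Tm} {τ1 τ2 : Ty} {μα : Tr} {σα : Mc} {a : Ty} {μβ : Tr} {σβ : Mc}
      {b : Ty} {μ : Tr} {σ : Mc} {γ : Ty} :
      HasTy (τ1 :: Γ) e τ2 μα σα a μβ σβ b →
      HasTy Γ (.lam e) (.arrow τ1 τ2 μα σα a μβ σβ b) μ σ γ μ σ γ
  | app {Γ : List Ty} {e1 e2 : Tm} {τ1 τ2 : Ty} {μα : Tr} {σα : Mc} {a : Ty} {μβ : Tr}
      {σβ : Mc} {b : Ty} {μγ : Tr} {σγ : Mc} {γ : Ty} {μδ : Tr} {σδ : Mc} {δ : Ty} :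
      HasTy Γ e1 (.arrow τ1 τ2 μα σα a μβ σβ b) μγ σγ γ μδ σδ δ →
      HasTy Γ e2 τ1 μβ σβ b μγ σγ γ →
      HasTy Γ (.app e1 e2) τ2 μα σα a μδ σδ δ
  | shift0 {Γ : List Ty} {e : Tm} {τ τ1 : Ty} {μ1 : Tr} {σ1 : Mc} {τ2 : Ty} {μ' : Tr} {σ' : Mc}
      {α τ0 : Ty} {μ0 : Tr} {σ0 : Mc} {τ0' : Ty} {μ0' : Tr} {σ0' : Mc} {μβ : Tr} {β : Ty} :
      HasTy ((.arrow τ τ1 μ1 σ1 τ2 μ' σ' α) :: Γ) e τ0 μ0 σ0 τ0' μ0' σ0' β →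
      HasTy Γ (.shift0 e) τ μβ (.cons τ1 μ1 σ1 τ2 μ' σ') α μβ (.cons τ0 μ0 σ0 τ0' μ0' σ0') β
  | reset0 {Γ : List Ty} {e : Tm} {γ : Ty} {μid : Tr} {σid : Mc} {γ' τ : Ty} {μα : Tr}
      {σα : Mc} {α : Ty} {μβ : Tr} {σβ : Mc} {β : Ty} :
      IdContType γ μid σid γ' →
      HasTy Γ e γ μid σid γ' .empty (.cons τ μα σα α μβ σβ) β →
      HasTy Γ (.reset0 e) τ μα σα α μβ σβ β

/- The translation ⁺ from 4D' types to 4D types, inserting the empty trail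
   type •μ at every position requiring a trail type. -/
mutual
def pTy : PTy → Ty
  | .nat => .nat
  | .arr a b sα α sβ β =>
      .arrow (pTy a) (pTy b) .empty (pM sα) (pTy α) .empty (pM sβ) (pTy β)
def pM : PM → Mc
  | .empty => .empty
  | .cons t1 σ1 t2 rest => .cons (pTy t1) .empty (pM σ1) (pTy t2) .empty (pM rest)
end

/-- Typability from 4D' to 4D (adding trails for shift0/reset0):
    if Γ ⊢_4D' e : τ ⟨σα⟩ α ⟨σβ⟩ β, then
    Γ⁺ ⊢_4D e : τ⁺ ⟨•μ, σα⁺⟩ α⁺ ⟨•μ, σβ⁺⟩ β⁺. -/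
theorem fourdp_to_fourd {Γ : List PTy} {e : Tm} {τ : PTy} {σα : PM} {α : PTy} {σβ : PM}
    {β : PTy} (h : PHasTy Γ e τ σα α σβ β) :
    HasTy (Γ.map pTy) e (pTy τ) .empty (pM σα) (pTy α) .empty (pM σβ) (pTy β) := by
  induction h with
  | var hx => exact .var (by simp [hx])
  | num => exact .num
  | lam _ ih => exact .lam ih
  | app _ _ ih1 ih2 => exact .app ih1 ih2
  | shift0 _ ih => exact .shift0 ih
  | reset0 hid _ ih =>
    cases hid with
    | idEmpty => exact .reset0 (.idEmpty _) ih
    | idMeta => exact .reset0 (.idMeta _ _ _ _) ih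

end P2FourD
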